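/- Let a ∈ ℂ with a ≠ 0, a ≠ 1. Then (1/(2πi)) ∫_{ℂ} d log((z-a)/(z-1)) ∧ dz̄/z̄ = log|a|², where the integral is over the complex plane (the integrand is absolutely integrable). -/

import Mathlib

open MeasureTheory Complex Set Metric Real
open scoped Real

noncomputable def Complex.abs : AbsoluteValue ℂ ℝ where
  toFun := fun z => ‖z‖
  map_mul' := norm_mul
  nonneg' := norm_nonneg
  eq_zero' := fun _ => norm_eq_zero
  add_le' := norm_add_le

theorem Complex.norm_eq_abs (z : ℂ) : ‖z‖ = Complex.abs z := rfl

theorem Complex.abs_conj (z : ℂ) : Complex.abs ((starRingEnd ℂ) z) = Complex.abs z :=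
  Complex.norm_conj z

theorem abs_circleMap_zero (R θ : ℝ) : Complex.abs (circleMap 0 R θ) = |R| :=
  norm_circleMap_zero R θ

theorem Complex.polarCoord_symm_abs (p : ℝ × ℝ) :
    Complex.abs (Complex.polarCoord.symm p) = |p.1| := by
  rw [← Complex.norm_eq_abs, Complex.polarCoord_symm_apply, norm_mul, Complex.norm_real,
    Real.norm_eq_abs, Complex.ofReal_cos, Complex.ofReal_sin, ← Complex.exp_mul_I,
    Complex.norm_exp_ofReal_mul_I, mul_one]

section Aux
theorem polar_int_iff {E : Type*} [NormedAddCommGroup E] [NormedSpace ℝ E] (g : ℝ × ℝ → E) :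
    IntegrableOn (fun p => p.1 • g (polarCoord.symm p)) polarCoord.target ↔ Integrable g := by
  have A : ∀ p ∈ polarCoord.target, HasFDerivWithinAt polarCoord.symm
      (LinearMap.toContinuousLinearMap (Matrix.toLin (Module.Basis.finTwoProd ℝ) (Module.Basis.finTwoProd ℝ)
        !![Real.cos p.2, -p.1 * Real.sin p.2; Real.sin p.2, p.1 * Real.cos p.2]))
      polarCoord.target p :=
    fun p _ => (hasFDerivAt_polarCoord_symm p).hasFDerivWithinAt
  have H := integrableOn_image_iff_integrableOn_abs_det_fderiv_smul volume
    polarCoord.open_target.measurableSet A polarCoord.symm.injOn g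
  rw [polarCoord.symm_image_target_eq_source] at H
  have Hdet : ∀ p ∈ polarCoord.target,
      |(LinearMap.toContinuousLinearMap (Matrix.toLin (Module.Basis.finTwoProd ℝ) (Module.Basis.finTwoProd ℝ)
        !![Real.cos p.2, -p.1 * Real.sin p.2; Real.sin p.2, p.1 * Real.cos p.2])).det| • g (polarCoord.symm p)
        = p.1 • g (polarCoord.symm p) := by
    intro p hp
    have : (LinearMap.toContinuousLinearMap (Matrix.toLin (Module.Basis.finTwoProd ℝ) (Module.Basis.finTwoProd ℝ)
        !![Real.cos p.2, -p.1 * Real.sin p.2; Real.sin p.2, p.1 * Real.cos p.2])).det = p.1 := by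
      conv_rhs => rw [← one_mul p.1, ← Real.cos_sq_add_sin_sq p.2]
      simp only [neg_mul, LinearMap.det_toContinuousLinearMap, LinearMap.det_toLin,
        Matrix.det_fin_two_of, sub_neg_eq_add]
      ring
    rw [this, abs_of_pos hp.1]
  rw [integrableOn_congr_fun Hdet polarCoord.open_target.measurableSet] at H
  rw [← H]
  constructor
  · intro h
    rw [← integrableOn_univ]
    exact h.congr_set_ae polarCoord_source_ae_eq_univ.symm
  · intro h
    exact (integrableOn_univ.mpr h).congr_set_ae polarCoord_source_ae_eq_univ

theorem polar_int_iff_C {E : Type*} [NormedAddCommGroup E] [NormedSpace ℝ E] (f : ℂ → E) :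
    IntegrableOn (fun p : ℝ × ℝ => p.1 • f (Complex.polarCoord.symm p)) polarCoord.target ↔
      Integrable f := by
  rw [← (Complex.volume_preserving_equiv_real_prod.symm).integrable_comp_emb
    Complex.measurableEquivRealProd.symm.measurableEmbedding]
  exact polar_int_iff (f ∘ Complex.measurableEquivRealProd.symm)

theorem int_inv_norm_ball {R : ℝ} (hR : 0 < R) :
    Integrable ((ball (0:ℂ) R).indicator fun z => ‖z‖⁻¹) := by
  rw [← polar_int_iff_C]
  have hmeas : AEStronglyMeasurable
      (fun p : ℝ × ℝ => p.1 • (ball (0:ℂ) R).indicator (fun z => ‖z‖⁻¹) (Complex.polarCoord.symm p))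
      (volume.restrict polarCoord.target) := by
    refine (Measurable.aestronglyMeasurable ?_).restrict
    apply measurable_fst.smul
    refine Measurable.comp (Measurable.indicator (measurable_norm.inv) measurableSet_ball) ?_
    have : (fun p : ℝ × ℝ => Complex.polarCoord.symm p)
        = fun p : ℝ × ℝ => ((p.1 : ℂ) * (Real.cos p.2 + Real.sin p.2 * I)) :=
      funext Complex.polarCoord_symm_apply
    show Measurable fun p : ℝ × ℝ => Complex.polarCoord.symm p
    rw [this]
    fun_prop
  refine Integrable.mono' (g := (Ioo (0:ℝ) R ×ˢ Ioo (-π) π).indicator fun _ => (1:ℝ)) ?_ hmeas ?_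
  · refine ((integrable_indicator_iff (measurableSet_Ioo.prod measurableSet_Ioo)).mpr ?_).integrableOn
    refine (integrableOn_const_iff (C := (1:ℝ)) (by simp)).mpr (Or.inr ?_)
    rw [Measure.volume_eq_prod, Measure.prod_prod]
    exact ENNReal.mul_lt_top (by simp) (by simp)
  · rw [ae_restrict_iff' polarCoord.open_target.measurableSet]
    refine ae_of_all _ fun p hp => ?_
    have hp1 : 0 < p.1 := hp.1
    by_cases hb : Complex.polarCoord.symm p ∈ ball (0:ℂ) R
    · rw [Set.indicator_of_mem hb]
      have habs : ‖Complex.polarCoord.symm p‖ = p.1 := by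
        rw [Complex.norm_eq_abs, Complex.polarCoord_symm_abs, abs_of_pos hp1]
      have : p ∈ Ioo (0:ℝ) R ×ˢ Ioo (-π) π := by
        refine ⟨⟨hp1, ?_⟩, hp.2⟩
        have := mem_ball_zero_iff.mp hb
        rwa [habs] at this
      rw [Set.indicator_of_mem this, smul_eq_mul, habs, mul_inv_cancel₀ hp1.ne']
      simp
    · rw [Set.indicator_of_notMem hb, smul_zero]
      simpa using Set.indicator_nonneg (fun _ _ => zero_le_one) p

theorem int_inv_norm_ball' (p₀ : ℂ) {R : ℝ} (hR : 0 < R) :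
    IntegrableOn (fun z : ℂ => ‖z - p₀‖⁻¹) (ball p₀ R) := by
  have h := (int_inv_norm_ball hR).comp_sub_right p₀
  have e : (fun z : ℂ => (ball (0:ℂ) R).indicator (fun z => ‖z‖⁻¹) (z - p₀))
      = (ball p₀ R).indicator (fun z => ‖z - p₀‖⁻¹) := by
    funext z
    by_cases hm : z ∈ ball p₀ R
    · rw [Set.indicator_of_mem hm, Set.indicator_of_mem (mem_ball_zero_iff.mpr
        (mem_ball_iff_norm.mp hm))]
    · rw [Set.indicator_of_notMem hm, Set.indicator_of_notMem]
      intro hc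
      exact hm (mem_ball_iff_norm.mpr (mem_ball_zero_iff.mp hc))
  rw [e] at h
  exact (integrable_indicator_iff measurableSet_ball).mp h

theorem bound_helper {A x₁ x₂ x₃ b₁ b₂ : ℝ} (hA : 0 ≤ A) (h1 : b₁ ≤ x₁) (h2 : b₂ ≤ x₂)
    (hb₁ : 0 < b₁) (hb₂ : 0 < b₂) (hx₃ : 0 ≤ x₃) :
    A / (x₁ * x₂ * x₃) ≤ A / (b₁ * b₂) * x₃⁻¹ := by
  rcases eq_or_lt_of_le hx₃ with h | h
  · simp [← h]
  · have e : A / (b₁ * b₂) * x₃⁻¹ = A / (b₁ * b₂ * x₃) := by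
      field_simp
    rw [e]
    apply div_le_div_of_nonneg_left hA (by positivity)
    have hx1 : 0 < x₁ := lt_of_lt_of_le hb₁ h1
    have hx2 : 0 < x₂ := lt_of_lt_of_le hb₂ h2
    gcongr

theorem lower_tri {z p₀ w : ℂ} {ε : ℝ} (hz : ‖z - p₀‖ < ε) :
    Complex.abs (p₀ - w) - ε ≤ Complex.abs (z - w) := by
  have h := norm_add_le (p₀ - z) (z - w)
  rw [sub_add_sub_cancel] at h
  rw [norm_sub_rev p₀ z] at h
  simp only [← Complex.norm_eq_abs]
  linarith

theorem g_norm (a : ℂ) (z : ℂ) :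
    ‖(a - 1) / ((z - 1) * (z - a) * (starRingEnd ℂ) z) * (-2 * I)‖
      = 2 * Complex.abs (a - 1) / (Complex.abs (z - 1) * Complex.abs (z - a) * Complex.abs z) := by
  rw [norm_mul, norm_div, Complex.norm_eq_abs, Complex.norm_eq_abs, Complex.norm_eq_abs,
    map_mul, map_mul, Complex.abs_conj]
  have h2 : Complex.abs (-2 * I) = 2 := by rw [← Complex.norm_eq_abs]; simp
  rw [h2]
  ring

theorem g_meas (a : ℂ) :
    Measurable fun z : ℂ => (a - 1) / ((z - 1) * (z - a) * (starRingEnd ℂ) z) * (-2 * I) := by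
  apply Measurable.mul _ measurable_const
  apply Measurable.div measurable_const
  exact ((measurable_id.sub measurable_const).mul (measurable_id.sub measurable_const)).mul
    Complex.continuous_conj.measurable

theorem ball_integrable (a p₀ : ℂ) {ε c₁ c₂ : ℝ} (hc₁ : 0 < c₁) (hc₂ : 0 < c₂) (hεpos : 0 < ε)
    (hbound : ∀ z ∈ ball p₀ ε,
      ‖(a - 1) / ((z - 1) * (z - a) * (starRingEnd ℂ) z) * (-2 * I)‖
        ≤ (2 * Complex.abs (a - 1) / (c₁ * c₂)) * ‖z - p₀‖⁻¹) :
    IntegrableOn (fun z : ℂ => (a - 1) / ((z - 1) * (z - a) * (starRingEnd ℂ) z) * (-2 * I))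
      (ball p₀ ε) := by
  refine Integrable.mono'
    (g := fun z => (2 * Complex.abs (a - 1) / (c₁ * c₂)) * ‖z - p₀‖⁻¹)
    ((int_inv_norm_ball' p₀ hεpos).const_mul _)
    ((g_meas a).aestronglyMeasurable.restrict) ?_
  exact (ae_restrict_iff' measurableSet_ball).mpr (ae_of_all _ hbound)

theorem g_integrable (a : ℂ) (ha0 : a ≠ 0) (ha1 : a ≠ 1) :
    Integrable fun z : ℂ => (a - 1) / ((z - 1) * (z - a) * (starRingEnd ℂ) z) * (-2 * I) := by
  set g : ℂ → ℂ := fun z => (a - 1) / ((z - 1) * (z - a) * (starRingEnd ℂ) z) * (-2 * I) with hg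
  have hA : (0:ℝ) ≤ 2 * Complex.abs (a - 1) := by positivity
  have ha0' : 0 < Complex.abs a := by simpa using ha0
  have ha1' : 0 < Complex.abs (a - 1) := by simpa [sub_eq_zero] using ha1
  set m : ℝ := min (min 1 (Complex.abs a)) (Complex.abs (a - 1)) with hm
  have hm0 : 0 < m := lt_min (lt_min one_pos ha0') ha1'
  have hm1 : m ≤ 1 := le_trans (min_le_left _ _) (min_le_left _ _)
  have hma : m ≤ Complex.abs a := le_trans (min_le_left _ _) (min_le_right _ _)
  have hma1 : m ≤ Complex.abs (a - 1) := min_le_right _ _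
  set ε : ℝ := m / 2 with hε
  have hεpos : 0 < ε := by positivity
  have hεhalf : ε ≤ 1 / 2 := by rw [hε]; linarith
  have hεa : ε ≤ Complex.abs a / 2 := by rw [hε]; linarith
  have hεa1 : ε ≤ Complex.abs (a - 1) / 2 := by rw [hε]; linarith
  -- ball at 0
  have hB0 : IntegrableOn g (ball 0 ε) := by
    apply ball_integrable a 0 (c₁ := 1/2) (c₂ := Complex.abs a / 2) (by norm_num)
      (by positivity) hεpos
    intro z hz
    rw [mem_ball_iff_norm] at hz
    rw [g_norm]
    have e1 : Complex.abs ((0:ℂ) - 1) = 1 := by simp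
    have e2 : Complex.abs ((0:ℂ) - a) = Complex.abs a := by
      rw [zero_sub, map_neg_eq_map]
    have b1 : (1:ℝ)/2 ≤ Complex.abs (z - 1) := by
      have := lower_tri (w := 1) hz; rw [e1] at this; linarith
    have b2 : Complex.abs a / 2 ≤ Complex.abs (z - a) := by
      have := lower_tri (w := a) hz; rw [e2] at this; linarith
    have e3 : Complex.abs z = ‖z - 0‖ := by simp [Complex.norm_eq_abs]
    rw [e3]
    exact bound_helper hA b1 b2 (by norm_num) (by positivity) (norm_nonneg _)
  -- ball at 1
  have hB1 : IntegrableOn g (ball 1 ε) := by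
    apply ball_integrable a 1 (c₁ := Complex.abs (a-1) / 2) (c₂ := 1/2) (by positivity)
      (by norm_num) hεpos
    intro z hz
    rw [mem_ball_iff_norm] at hz
    rw [g_norm]
    have e2 : Complex.abs ((1:ℂ) - a) = Complex.abs (a - 1) := by
      rw [← neg_sub, map_neg_eq_map]
    have b2 : Complex.abs (a-1) / 2 ≤ Complex.abs (z - a) := by
      have := lower_tri (w := a) hz; rw [e2] at this; linarith
    have b3 : (1:ℝ)/2 ≤ Complex.abs z := by
      have h := lower_tri (w := 0) hz
      rw [sub_zero, sub_zero, map_one] at h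
      linarith
    have e4 : (2 * Complex.abs (a-1)) / (Complex.abs (z-1) * Complex.abs (z-a) * Complex.abs z)
        = (2 * Complex.abs (a-1)) / (Complex.abs (z-a) * Complex.abs z * Complex.abs (z-1)) := by
      ring_nf
    rw [e4]
    have e5 : ‖z - (1:ℂ)‖ = Complex.abs (z - 1) := Complex.norm_eq_abs _
    rw [e5]
    exact bound_helper hA b2 b3 (by positivity) (by norm_num) (Complex.abs.nonneg _)
  -- ball at a
  have hBa : IntegrableOn g (ball a ε) := by
    apply ball_integrable a a (c₁ := Complex.abs (a-1)/2) (c₂ := Complex.abs a/2)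
      (by positivity) (by positivity) hεpos
    intro z hz
    rw [mem_ball_iff_norm] at hz
    rw [g_norm]
    have b1 : Complex.abs (a-1)/2 ≤ Complex.abs (z - 1) := by
      have h := lower_tri (w := 1) hz
      linarith
    have b3 : Complex.abs a / 2 ≤ Complex.abs z := by
      have h := lower_tri (w := 0) hz
      rw [sub_zero, sub_zero] at h
      linarith
    have e4 : 2 * Complex.abs (a-1) / (Complex.abs (z-1) * Complex.abs (z-a) * Complex.abs z)
        = 2 * Complex.abs (a-1) / (Complex.abs (z-1) * Complex.abs z * Complex.abs (z-a)) := by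
      ring_nf
    rw [e4]
    have e5 : ‖z - a‖ = Complex.abs (z - a) := Complex.norm_eq_abs _
    rw [e5]
    exact bound_helper hA b1 b3 (by positivity) (by positivity) (Complex.abs.nonneg _)
  set R : ℝ := 2 * Complex.abs a + 2 with hR
  have hK : IntegrableOn g (closedBall 0 R \ (ball 0 ε ∪ ball 1 ε ∪ ball a ε)) := by
    apply ContinuousOn.integrableOn_compact
    · exact (isCompact_closedBall 0 R).diff ((isOpen_ball.union isOpen_ball).union isOpen_ball)
    · apply ContinuousOn.mul _ continuousOn_const
      apply ContinuousOn.div continuousOn_const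
      · exact (((continuous_id.sub continuous_const).mul
          (continuous_id.sub continuous_const)).mul Complex.continuous_conj).continuousOn
      · intro z hz
        obtain ⟨hzB, hzn⟩ := hz
        simp only [mem_union, not_or] at hzn
        obtain ⟨⟨hn0, hn1⟩, hna⟩ := hzn
        have hz0 : z ≠ 0 := fun h => hn0 (h ▸ mem_ball_self hεpos)
        have hz1 : z ≠ 1 := fun h => hn1 (h ▸ mem_ball_self hεpos)
        have hza : z ≠ a := fun h => hna (h ▸ mem_ball_self hεpos)
        exact mul_ne_zero (mul_ne_zero (sub_ne_zero.mpr hz1) (sub_ne_zero.mpr hza))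
          ((map_ne_zero _).mpr hz0)
  have hT : IntegrableOn g (closedBall (0:ℂ) R)ᶜ := by
    refine Integrable.mono' (g := fun z => (64 * Complex.abs (a-1)) * (1 + ‖z‖)^(-3:ℝ))
      ((integrable_one_add_norm ?_).const_mul _).integrableOn
      ((g_meas a).aestronglyMeasurable.restrict) ?_
    · rw [Complex.finrank_real_complex]; norm_num
    · rw [ae_restrict_iff' measurableSet_closedBall.compl]
      refine ae_of_all _ fun z hz => ?_
      have ht : R < Complex.abs z := by
        simp only [mem_compl_iff, mem_closedBall, Complex.dist_eq, sub_zero, not_le] at hz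
        exact hz
      set t : ℝ := Complex.abs z with htdef
      have ht2 : 2 ≤ t := by
        have : 0 ≤ Complex.abs a := Complex.abs.nonneg a
        linarith
      have hta : Complex.abs a ≤ t / 2 := by linarith
      rw [g_norm]
      have b1 : t/2 ≤ Complex.abs (z - 1) := by
        have h := norm_sub_norm_le z (1:ℂ)
        rw [Complex.norm_eq_abs, Complex.norm_eq_abs, Complex.norm_eq_abs, map_one] at h
        linarith
      have b2 : t/2 ≤ Complex.abs (z - a) := by
        have h := norm_sub_norm_le z a
        rw [Complex.norm_eq_abs, Complex.norm_eq_abs, Complex.norm_eq_abs] at h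
        linarith
      have hrpow : (1 + ‖z‖)^(-3:ℝ) = ((1 + t)^3)⁻¹ := by
        rw [show (-3:ℝ) = -((3:ℕ):ℝ) by norm_num, Real.rpow_neg (by positivity),
          Real.rpow_natCast, Complex.norm_eq_abs]
      show 2 * Complex.abs (a - 1) / (Complex.abs (z - 1) * Complex.abs (z - a) * Complex.abs z)
        ≤ 64 * Complex.abs (a-1) * (1 + ‖z‖)^(-3:ℝ)
      rw [hrpow]
      have b3 : t ≤ Complex.abs z := le_of_eq htdef
      have step1 : 2 * Complex.abs (a-1) /
          (Complex.abs (z-1) * Complex.abs (z-a) * Complex.abs z)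
          ≤ 2 * Complex.abs (a-1) / ((t/2) * (t/2) * t) := by
        apply div_le_div_of_nonneg_left hA (by positivity)
        gcongr
      have h1t : 1 + t ≤ 2 * t := by linarith
      have hcube : (1 + t)^3 ≤ (2*t)^3 := pow_le_pow_left₀ (by linarith) h1t 3
      have step2 : 2 * Complex.abs (a-1) / ((t/2) * (t/2) * t)
          ≤ 64 * Complex.abs (a-1) * ((1 + t)^3)⁻¹ := by
        rw [← div_eq_mul_inv, div_le_div_iff₀ (by positivity) (by positivity)]
        have h8 := mul_le_mul_of_nonneg_left hcube hA
        nlinarith [h8]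
      linarith
  have hcover : (univ : Set ℂ) ⊆ (((ball 0 ε ∪ ball 1 ε ∪ ball a ε) ∪
      (closedBall 0 R \ (ball 0 ε ∪ ball 1 ε ∪ ball a ε))) ∪ (closedBall (0:ℂ) R)ᶜ) := by
    intro z _
    by_cases h1 : z ∈ closedBall (0:ℂ) R
    · by_cases h2 : z ∈ ball 0 ε ∪ ball 1 ε ∪ ball a ε
      · exact Or.inl (Or.inl h2)
      · exact Or.inl (Or.inr ⟨h1, h2⟩)
    · exact Or.inr h1
  rw [← integrableOn_univ]
  exact ((((hB0.union hB1).union hBa).union hK).union hT).mono_set hcover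

theorem J_eq {r : ℝ} (hr : 0 < r) {b : ℂ} (hb : Complex.abs b ≠ r) :
    ∫ θ in Ioo (-π) π, Complex.exp (θ * I) * (circleMap 0 r θ - b)⁻¹
      = if Complex.abs b < r then 2 * π / r else 0 := by
  set f : ℝ → ℂ := fun θ => Complex.exp (θ * I) * (circleMap 0 r θ - b)⁻¹ with hf
  have hper : Function.Periodic f (2 * π) := by
    intro θ
    simp only [hf]
    congr 1
    · rw [Complex.ofReal_add]
      push_cast
      rw [add_mul, Complex.exp_add]
      simp [Complex.exp_two_pi_mul_I]
    · rw [periodic_circleMap 0 r θ]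
  have h1 : ∫ θ in Ioo (-π) π, f θ = ∫ θ in (-π)..π, f θ := by
    rw [intervalIntegral.integral_of_le (by linarith [pi_pos]),
      integral_Ioc_eq_integral_Ioo]
  have h2 : ∫ θ in (-π)..π, f θ = ∫ θ in (0:ℝ)..(2*π), f θ := by
    have := hper.intervalIntegral_add_eq (-π) 0
    rw [zero_add] at this
    rw [← this]
    congr 1
    ring
  have h3 : (∮ z in C(0, r), (z - b)⁻¹) = (r * I) * ∫ θ in (0:ℝ)..(2*π), f θ := by
    rw [circleIntegral]
    rw [← intervalIntegral.integral_const_mul]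
    congr 1
    funext θ
    rw [deriv_circleMap]
    simp only [smul_eq_mul, hf, circleMap_zero]
    ring
  rw [h1, h2]
  have hrI : (r : ℂ) * I ≠ 0 := by
    simp [Complex.ext_iff, hr.ne']
  by_cases hlt : Complex.abs b < r
  · rw [if_pos hlt]
    have hball : b ∈ ball (0:ℂ) r := by
      simpa [Complex.dist_eq, Complex.norm_eq_abs] using hlt
    rw [circleIntegral.integral_sub_inv_of_mem_ball hball] at h3
    have h4 : ∫ θ in (0:ℝ)..(2*π), f θ = 2*(π:ℂ)*I / ((r:ℂ) * I) := by
      rw [eq_div_iff hrI]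
      linear_combination -h3
    rw [h4, mul_div_mul_right _ _ Complex.I_ne_zero]
    push_cast
    ring
  · rw [if_neg hlt]
    have hgt : r < Complex.abs b := lt_of_le_of_ne (not_lt.mp hlt) (Ne.symm hb)
    have hzero : (∮ z in C(0, r), (z - b)⁻¹) = 0 := by
      apply circleIntegral_eq_zero_of_differentiable_on_off_countable hr.le
        Set.countable_empty
      · intro z hz
        apply ContinuousAt.continuousWithinAt
        apply ContinuousAt.inv₀ (by fun_prop)
        intro h
        rw [sub_eq_zero] at h
        subst h
        simp only [closedBall, Complex.dist_eq, sub_zero, mem_setOf_eq] at hz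
        exact absurd hz (not_le.mpr hgt)
      · intro z hz
        apply DifferentiableAt.inv (by fun_prop)
        intro h
        rw [sub_eq_zero] at h
        subst h
        have : Complex.abs z < r := by simpa [Complex.dist_eq, Complex.norm_eq_abs] using hz.1
        exact absurd this (not_lt.mpr hgt.le)
    rw [hzero] at h3
    have := (mul_eq_zero.mp h3.symm).resolve_left hrI
    exact this

theorem inner_eq (a : ℂ) {r : ℝ} (hr : 0 < r) (hr1 : r ≠ 1) (hra : r ≠ Complex.abs a) :
    ∫ θ in Ioo (-π) π, (r : ℝ) •
        ((a - 1) / ((Complex.polarCoord.symm (r, θ) - 1) * (Complex.polarCoord.symm (r, θ) - a) *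
          (starRingEnd ℂ) (Complex.polarCoord.symm (r, θ))) * (-2 * I))
      = (-2 * I) * ((if Complex.abs a < r then 2 * (π:ℂ) / r else 0) -
          (if 1 < r then 2 * (π:ℂ) / r else 0)) := by
  have habs : ∀ θ : ℝ, Complex.abs (circleMap 0 r θ) = r := by
    intro θ; rw [abs_circleMap_zero, abs_of_pos hr]
  have hz1 : ∀ θ : ℝ, circleMap 0 r θ - 1 ≠ 0 := by
    intro θ h
    rw [sub_eq_zero] at h
    apply hr1
    rw [← habs θ, h, map_one]
  have hza : ∀ θ : ℝ, circleMap 0 r θ - a ≠ 0 := by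
    intro θ h
    rw [sub_eq_zero] at h
    exact hra (by rw [← habs θ, h])
  have key : ∀ θ : ℝ, (r : ℝ) •
        ((a - 1) / ((Complex.polarCoord.symm (r, θ) - 1) * (Complex.polarCoord.symm (r, θ) - a) *
          (starRingEnd ℂ) (Complex.polarCoord.symm (r, θ))) * (-2 * I))
      = (-2 * I) * (Complex.exp (θ * I) * (circleMap 0 r θ - a)⁻¹
          - Complex.exp (θ * I) * (circleMap 0 r θ - 1)⁻¹) := by
    intro θ
    have hz : Complex.polarCoord.symm (r, θ) = circleMap 0 r θ := by
      simp [circleMap, Complex.exp_mul_I, ← Complex.ofReal_cos, ← Complex.ofReal_sin]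
    rw [hz]
    have hconj : (starRingEnd ℂ) (circleMap 0 r θ) = r * (Complex.exp (θ * I))⁻¹ := by
      rw [circleMap_zero, map_mul, Complex.conj_ofReal, ← Complex.exp_conj]
      congr 1
      rw [← Complex.exp_neg]
      congr 1
      simp [Complex.conj_I]
    rw [hconj, Complex.real_smul]
    have h1 : (a - 1) = (circleMap 0 r θ - 1) - (circleMap 0 r θ - a) := by ring
    field_simp [hz1 θ, hza θ, Complex.exp_ne_zero, hr.ne']
    ring
  rw [MeasureTheory.integral_congr_ae (ae_of_all _ fun θ => key θ)]
  have ha' : Continuous fun θ : ℝ => Complex.exp (θ * I) * (circleMap 0 r θ - a)⁻¹ := by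
    exact (Complex.continuous_ofReal.mul continuous_const).cexp.mul
      (((continuous_circleMap 0 r).sub continuous_const).inv₀ hza)
  have h1' : Continuous fun θ : ℝ => Complex.exp (θ * I) * (circleMap 0 r θ - 1)⁻¹ := by
    exact (Complex.continuous_ofReal.mul continuous_const).cexp.mul
      (((continuous_circleMap 0 r).sub continuous_const).inv₀ hz1)
  rw [MeasureTheory.integral_const_mul, MeasureTheory.integral_sub
    ((ha'.integrableOn_Icc).mono_set Ioo_subset_Icc_self) ((h1'.integrableOn_Icc).mono_set Ioo_subset_Icc_self),
    J_eq hr (Ne.symm hra), J_eq hr (b := 1) (by rw [map_one]; exact Ne.symm hr1)]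
  rw [map_one]
  split_ifs <;> push_cast <;> ring

theorem ae_ne_const (c : ℝ) : ∀ᵐ r : ℝ, r ≠ c := by
  rw [ae_iff]
  have : {r : ℝ | ¬r ≠ c} = {c} := by ext x; simp
  rw [this]
  exact Real.volume_singleton

theorem key_integral (a : ℂ) (ha0 : a ≠ 0) (ha1 : a ≠ 1) :
    ∫ z : ℂ, ((a - 1) / ((z - 1) * (z - a) * starRingEnd ℂ z) * (-2 * Complex.I))
      = 4 * π * I * Real.log (Complex.abs a) := by
  have ha0' : 0 < Complex.abs a := by simpa using ha0
  set g : ℂ → ℂ := fun z => (a - 1) / ((z - 1) * (z - a) * (starRingEnd ℂ) z) * (-2 * I) with hgdef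
  have hg := g_integrable a ha0 ha1
  rw [show (∫ z : ℂ, ((a - 1) / ((z - 1) * (z - a) * starRingEnd ℂ z) * (-2 * Complex.I)))
      = ∫ z : ℂ, g z from rfl]
  rw [← Complex.integral_comp_polarCoord_symm g]
  have hInt : IntegrableOn (fun p : ℝ × ℝ => p.1 • g (Complex.polarCoord.symm p))
      (Ioi (0:ℝ) ×ˢ Ioo (-π) π) (volume.prod volume) := by
    have h := (polar_int_iff_C g).mpr hg
    rw [polarCoord_target] at h
    rwa [Measure.volume_eq_prod] at h
  rw [polarCoord_target, Measure.volume_eq_prod, setIntegral_prod _ hInt]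
  -- now : ∫ r in Ioi 0, ∫ θ in Ioo (-π) π, (r,θ).1 • g (polarCoord.symm (r,θ))
  have hae : ∀ᵐ r : ℝ, r ≠ 1 ∧ r ≠ Complex.abs a := (ae_ne_const 1).and (ae_ne_const _)
  rcases lt_trichotomy (Complex.abs a) 1 with hlt | heq | hgt
  · -- |a| < 1
    have hcongr : (∫ r in Ioi (0:ℝ), ∫ θ in Ioo (-π) π, (r:ℝ) • g (Complex.polarCoord.symm (r, θ)))
        = ∫ r in Ioi (0:ℝ), (Ioo (Complex.abs a) 1).indicator
            (fun r : ℝ => (-(4 * (π:ℂ) * I)) * (r:ℂ)⁻¹) r := by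
      apply setIntegral_congr_ae measurableSet_Ioi
      filter_upwards [hae] with r hr hrIoi
      rw [inner_eq a hrIoi hr.1 hr.2]
      by_cases hA : Complex.abs a < r
      · by_cases h1 : (1:ℝ) < r
        · rw [if_pos hA, if_pos h1, Set.indicator_of_notMem (by simp [mem_Ioo]; intro _; linarith)]
          ring
        · have hr1 : r < 1 := lt_of_le_of_ne (not_lt.mp h1) hr.1
          rw [if_pos hA, if_neg h1, Set.indicator_of_mem (Set.mem_Ioo.mpr ⟨hA, hr1⟩)]
          push_cast
          field_simp
          ring
      · have hra : r < Complex.abs a := lt_of_le_of_ne (not_lt.mp hA) hr.2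
        have h1 : ¬(1:ℝ) < r := by linarith
        rw [if_neg hA, if_neg h1, Set.indicator_of_notMem (by simp [mem_Ioo]; intro h; linarith)]
        ring
    rw [hcongr, integral_indicator measurableSet_Ioo, Measure.restrict_restrict measurableSet_Ioo]
    have hsub : Ioo (Complex.abs a) 1 ∩ Ioi 0 = Ioo (Complex.abs a) 1 :=
      inter_eq_self_of_subset_left (fun x hx => lt_of_le_of_lt (Complex.abs.nonneg a) hx.1)
    rw [hsub, MeasureTheory.integral_const_mul, ← integral_Ioc_eq_integral_Ioo,
      ← intervalIntegral.integral_of_le hlt.le]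
    simp only [← Complex.ofReal_inv]
    rw [intervalIntegral.integral_ofReal]
    have h0 : (0:ℝ) ∉ Set.uIcc (Complex.abs a) 1 := by
      rw [Set.uIcc_of_le hlt.le]
      simp only [Set.mem_Icc, not_and_or, not_le]
      exact Or.inl ha0'
    have : (∫ x in (Complex.abs a)..1, x⁻¹) = Real.log (1 / Complex.abs a) := by
      rw [← integral_one_div h0]
      simp [one_div]
    rw [this, one_div, Real.log_inv]
    push_cast
    ring
  · rw [heq, Real.log_one]
    have hcongr : (∫ r in Ioi (0:ℝ), ∫ θ in Ioo (-π) π, (r:ℝ) • g (Complex.polarCoord.symm (r, θ)))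
        = ∫ r in Ioi (0:ℝ), (0:ℂ) := by
      apply setIntegral_congr_ae measurableSet_Ioi
      filter_upwards [hae] with r hr hrIoi
      rw [inner_eq a hrIoi hr.1 hr.2, heq]
      simp
    rw [hcongr]
    simp
  · -- 1 < |a|
    have hcongr : (∫ r in Ioi (0:ℝ), ∫ θ in Ioo (-π) π, (r:ℝ) • g (Complex.polarCoord.symm (r, θ)))
        = ∫ r in Ioi (0:ℝ), (Ioo (1:ℝ) (Complex.abs a)).indicator
            (fun r : ℝ => (4 * (π:ℂ) * I) * (r:ℂ)⁻¹) r := by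
      apply setIntegral_congr_ae measurableSet_Ioi
      filter_upwards [hae] with r hr hrIoi
      rw [inner_eq a hrIoi hr.1 hr.2]
      by_cases h1 : (1:ℝ) < r
      · by_cases hA : Complex.abs a < r
        · rw [if_pos hA, if_pos h1, Set.indicator_of_notMem (by simp [mem_Ioo]; intro _; linarith)]
          ring
        · have hra : r < Complex.abs a := lt_of_le_of_ne (not_lt.mp hA) hr.2
          rw [if_neg hA, if_pos h1, Set.indicator_of_mem (Set.mem_Ioo.mpr ⟨h1, hra⟩)]
          push_cast
          field_simp
          ring
      · have hr1 : r < 1 := lt_of_le_of_ne (not_lt.mp h1) hr.1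
        have hA : ¬Complex.abs a < r := by linarith
        rw [if_neg hA, if_neg h1, Set.indicator_of_notMem (by simp [mem_Ioo]; intro h; linarith)]
        ring
    rw [hcongr, integral_indicator measurableSet_Ioo, Measure.restrict_restrict measurableSet_Ioo]
    have hsub : Ioo (1:ℝ) (Complex.abs a) ∩ Ioi 0 = Ioo (1:ℝ) (Complex.abs a) :=
      inter_eq_self_of_subset_left (fun x hx => lt_trans one_pos hx.1)
    rw [hsub, MeasureTheory.integral_const_mul, ← integral_Ioc_eq_integral_Ioo,
      ← intervalIntegral.integral_of_le hgt.le]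
    simp only [← Complex.ofReal_inv]
    rw [intervalIntegral.integral_ofReal]
    have h0 : (0:ℝ) ∉ Set.uIcc (1:ℝ) (Complex.abs a) := by
      rw [Set.uIcc_of_le hgt.le]
      simp only [Set.mem_Icc, not_and_or, not_le]
      exact Or.inl one_pos
    have : (∫ x in (1:ℝ)..(Complex.abs a), x⁻¹) = Real.log (Complex.abs a / 1) := by
      rw [← integral_one_div h0]
      simp [one_div]
    rw [this, div_one]

end Aux

/-- Single-valued logarithm:
`(1/(2πi)) ∫_ℂ d log((z-a)/(z-1)) ∧ dz̄/z̄ = log|a|²`.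
The 2-form `d log((z-a)/(z-1)) ∧ dz̄/z̄ = ((a-1)/((z-1)(z-a) z̄)) dz∧dz̄` corresponds to the
Lebesgue density `((a-1)/((z-1)(z-a) z̄))·(-2i)`, and `log|a|² = 2 log|a|`. -/
theorem stmt_4 (a : ℂ) (ha0 : a ≠ 0) (ha1 : a ≠ 1) :
    (1 / (2 * (Real.pi : ℂ) * Complex.I)) *
        ∫ z : ℂ, ((a - 1) / ((z - 1) * (z - a) * starRingEnd ℂ z) * (-2 * Complex.I))
      = ((2 * Real.log ‖a‖ : ℝ) : ℂ) := by
  rw [Complex.norm_eq_abs, key_integral a ha0 ha1]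
  have hπ : ((π:ℝ) : ℂ) ≠ 0 := Complex.ofReal_ne_zero.mpr Real.pi_ne_zero
  push_cast
  field_simp
  ring
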